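/- arXiv:1502.00885 — 9 statements merged into one kernel-verified Lean document; each statement's English description precedes it below -/
import Mathlib

section
/- Let (ν_n)_{n∈ℕ} be a sequence of Borel probability measures on ℝ such that ν_n((−∞,0)) = 0 for every n, and suppose (ν_n) satisfies the large deviations principle with rate function ψ : ℝ → [0,∞]. Let R be the attainable set of (ν_n). Then R is a nonempty closed subset of [0,∞) and {γ ∈ ℝ : ψ(γ) < ∞} ⊆ R. -/
open MeasureTheory Filter Set
open scoped ENNReal NNReal

/-- A sequence of Borel (probability) measures satisfies the large deviations principle
with rate function `ρ : X → [0,∞]`. -/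
def HasLDP {X : Type*} [TopologicalSpace X] [MeasurableSpace X]
    (ν : ℕ → Measure X) (ρ : X → ℝ≥0∞) : Prop :=
  LowerSemicontinuous ρ ∧
  (∀ F : Set X, IsClosed F →
    Filter.limsup (fun n : ℕ => ((n : ℝ)⁻¹ : EReal) * ENNReal.log (ν n F)) Filter.atTop
      ≤ -(⨅ x ∈ F, (ρ x : EReal))) ∧
  (∀ G : Set X, IsOpen G →
    -(⨅ x ∈ G, (ρ x : EReal)) ≤
      Filter.liminf (fun n : ℕ => ((n : ℝ)⁻¹ : EReal) * ENNReal.log (ν n G)) Filter.atTop)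

/-- The attainable set of a sequence of measures on ℝ. -/
def Attainable (ν : ℕ → Measure ℝ) : Set ℝ :=
  {γ : ℝ | ∀ ε > 0, ∃ N : ℕ, ∀ n ≥ N, 0 < ν n (Set.Ioo (γ - ε) (γ + ε))}

/-!
A point of finite rate is attainable: if the mass of a small interval around it vanished
infinitely often, then `log 0 = -∞` would push the liminf in the LDP lower bound down to `-∞`.
The upper bound applied to the whole line, whose mass is `1`, gives `inf ψ ≤ 0`, so such a
point exists. Closedness and the bound `R ⊆ [0, ∞)` are elementary.
-/

lemma mem_attainable_iff {ν : ℕ → Measure ℝ} {γ : ℝ} :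
    γ ∈ Attainable ν ↔ ∀ ε > 0, ∀ᶠ n in atTop, 0 < ν n (Metric.ball γ ε) := by
  simp only [Real.ball_eq_Ioo, eventually_atTop]
  rfl

lemma isClosed_attainable (ν : ℕ → Measure ℝ) : IsClosed (Attainable ν) := by
  refine isClosed_of_closure_subset fun γ hγ => mem_attainable_iff.2 fun ε hε => ?_
  obtain ⟨γ', hγ', hdist⟩ := Metric.mem_closure_iff.1 hγ (ε / 2) (half_pos hε)
  filter_upwards [mem_attainable_iff.1 hγ' (ε / 2) (half_pos hε)] with n hn
  refine hn.trans_le (measure_mono (Metric.ball_subset ?_))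
  rw [dist_comm]
  linarith

lemma attainable_subset_Ici {ν : ℕ → Measure ℝ} {a : ℝ} (h : ∀ n, ν n (Iio a) = 0) :
    Attainable ν ⊆ Ici a := by
  intro γ hγ
  by_contra hlt
  rw [mem_Ici, not_le] at hlt
  obtain ⟨n, hn⟩ := (mem_attainable_iff.1 hγ (a - γ) (sub_pos.2 hlt)).exists
  refine hn.ne' (measure_mono_null (fun x hx => ?_) (h n))
  rw [Real.ball_eq_Ioo] at hx
  exact mem_Iio.2 (by linarith [hx.2])

lemma eventually_pos_of_bot_lt_liminf {u : ℕ → ℝ≥0∞}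
    (h : ⊥ < liminf (fun n : ℕ => ((n : ℝ)⁻¹ : EReal) * ENNReal.log (u n)) atTop) :
    ∀ᶠ n in atTop, 0 < u n := by
  -- `n = 0` is excluded because there `(n : ℝ)⁻¹ = 0` and `0 * ⊥ = 0` in `EReal`.
  filter_upwards [eventually_lt_of_lt_liminf h, eventually_gt_atTop 0] with n hn hpos
  refine pos_iff_ne_zero.2 fun hzero => hn.ne' ?_
  have hinv : (0 : EReal) < ((n : ℝ)⁻¹ : EReal) :=
    EReal.coe_pos.2 (inv_pos.2 (Nat.cast_pos.2 hpos))
  rw [hzero, ENNReal.log_zero, EReal.mul_bot_of_pos hinv]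

namespace HasLDP

variable {X : Type*} [TopologicalSpace X] [MeasurableSpace X] {ν : ℕ → Measure X} {ρ : X → ℝ≥0∞}

lemma eventually_measure_pos (hLDP : HasLDP ν ρ) {G : Set X} (hG : IsOpen G) {x : X}
    (hx : x ∈ G) (hρ : ρ x < ⊤) : ∀ᶠ n in atTop, 0 < ν n G := by
  refine eventually_pos_of_bot_lt_liminf (lt_of_lt_of_le ?_ (hLDP.2.2 G hG))
  have hinf : (⨅ y ∈ G, (ρ y : EReal)) < ⊤ :=
    (biInf_le _ hx).trans_lt
      ((EReal.coe_ennreal_lt_coe_ennreal_iff.2 hρ).trans_eq EReal.coe_ennreal_top)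
  exact bot_lt_iff_ne_bot.2 (EReal.neg_eq_bot_iff.not.2 hinf.ne)

lemma exists_lt_top [∀ n, IsProbabilityMeasure (ν n)] (hLDP : HasLDP ν ρ) : ∃ x, ρ x < ⊤ := by
  have hupper := hLDP.2.1 univ isClosed_univ
  simp only [measure_univ, ENNReal.log_one, mul_zero, limsup_const, iInf_univ] at hupper
  have hinf : (⨅ x, (ρ x : EReal)) < ⊤ :=
    (EReal.le_neg_of_le_neg hupper).trans_lt (by simp)
  obtain ⟨x, hx⟩ := iInf_lt_iff.1 hinf
  exact ⟨x, EReal.coe_ennreal_lt_coe_ennreal_iff.1 (hx.trans_eq EReal.coe_ennreal_top.symm)⟩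

end HasLDP

lemma HasLDP.setOf_lt_top_subset_attainable {ν : ℕ → Measure ℝ} {ψ : ℝ → ℝ≥0∞}
    (hLDP : HasLDP ν ψ) : {γ | ψ γ < ⊤} ⊆ Attainable ν := fun _γ hγ =>
  mem_attainable_iff.2 fun _ε hε =>
    hLDP.eventually_measure_pos Metric.isOpen_ball (Metric.mem_ball_self hε) hγ

theorem stmt0 (ν : ℕ → Measure ℝ) [∀ n, IsProbabilityMeasure (ν n)]
    (hsupp : ∀ n, ν n (Set.Iio 0) = 0)
    (ψ : ℝ → ℝ≥0∞) (hLDP : HasLDP ν ψ) :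
    (Attainable ν).Nonempty ∧ IsClosed (Attainable ν) ∧ Attainable ν ⊆ Set.Ici 0 ∧
      {γ : ℝ | ψ γ < ⊤} ⊆ Attainable ν := by
  have hfinite := hLDP.setOf_lt_top_subset_attainable
  obtain ⟨x, hx⟩ := hLDP.exists_lt_top
  exact ⟨⟨x, hfinite hx⟩, isClosed_attainable ν, attainable_subset_Ici hsupp, hfinite⟩
end

section
/- Let X be a topological space and let (ξ_n)_{n∈ℕ} be a sequence of Borel probability measures on X satisfying the large deviations principle with rate function ϱ : X → [0,∞]. Let f : X → [−∞,0] be Borel measurable and suppose that f⁻¹([a,b]) is a closed subset of X for all real numbers a, b with sup_{x∈X}(f(x) − ϱ(x)) ≤ a ≤ b ≤ 0. Then limsup_{n→∞} (1/n)·log ∫_X e^{n f(x)} ξ_n(dx) ≤ sup_{x∈X} (f(x) − ϱ(x)), where f(x) − ϱ(x) is computed in the extended reals with the convention (−∞) − ∞ = −∞ and e^{−∞} = 0, and both sides lie in [−∞, 0]. -/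
open MeasureTheory Filter Set
open scoped ENNReal NNReal

open ExpGrowth

lemma limsup_inv_mul_log_eq_expGrowthSup (u : ℕ → ℝ≥0∞) :
    limsup (fun n : ℕ => ((n : ℝ)⁻¹ : EReal) * ENNReal.log (u n)) atTop = expGrowthSup u := by
  simp only [expGrowthSup, div_eq_mul_inv, mul_comm (ENNReal.log _)]
  rfl

lemma exists_lt_mem_Icc_add_mul {a δ t : ℝ} {m : ℕ} (hδ : 0 < δ) (hm : 0 < m)
    (hat : a ≤ t) (hta : t ≤ a + m * δ) :
    ∃ j < m, t ∈ Icc (a + j * δ) (a + (j + 1) * δ) := by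
  have hq : 0 ≤ (t - a) / δ := div_nonneg (by linarith) hδ.le
  by_cases hj : ⌊(t - a) / δ⌋₊ < m
  · refine ⟨_, hj, ?_, ?_⟩
    · linarith [(le_div_iff₀ hδ).1 (Nat.floor_le hq)]
    · linarith [(div_lt_iff₀ hδ).1 (Nat.lt_floor_add_one ((t - a) / δ))]
  · have ht : t = a + m * δ := by
      have := (le_div_iff₀ hδ).1 ((Nat.cast_le.2 (not_lt.1 hj)).trans (Nat.floor_le hq))
      linarith
    refine ⟨m - 1, Nat.sub_lt hm one_pos, ?_, ?_⟩ <;>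
      simp only [ht, Nat.cast_sub (Nat.one_le_of_lt hm), Nat.cast_one] <;> nlinarith

lemma expGrowthSup_exp_mul_le (a : ℝ) (v : ℕ → ℝ≥0∞) :
    expGrowthSup (fun n => EReal.exp (a * n) * v n) ≤ a + expGrowthSup v := by
  have h := expGrowthSup_mul_le (u := fun n => EReal.exp (a * n)) (v := v)
    (by simp [expGrowthSup_exp]) (by simp [expGrowthSup_exp])
  rwa [expGrowthSup_exp] at h

lemma lintegral_le_mul_add_sum_mul_measure {α ι : Type*} [MeasurableSpace α] {μ : Measure α}
    {g : α → ℝ≥0∞} {B : ℝ≥0∞} {s : Finset ι} {F : ι → Set α} {c : ι → ℝ≥0∞}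
    (hg : ∀ x, g x ≤ B ∨ ∃ i ∈ s, x ∈ F i ∧ g x ≤ c i) :
    ∫⁻ x, g x ∂μ ≤ B * μ univ + ∑ i ∈ s, c i * μ (F i) := by
  -- measurable hulls have the same measure, so the `F i` need not be measurable
  have hpt : ∀ x, g x ≤ B + ∑ i ∈ s, (toMeasurable μ (F i)).indicator (fun _ => c i) x := by
    intro x
    rcases hg x with hB | ⟨i, hi, hx, hc⟩
    · exact hB.trans le_self_add
    · refine hc.trans (le_add_left ?_)
      calc c i = (toMeasurable μ (F i)).indicator (fun _ => c i) x :=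
            (indicator_of_mem (subset_toMeasurable μ _ hx) (fun _ => c i)).symm
        _ ≤ _ := Finset.single_le_sum
            (f := fun j => (toMeasurable μ (F j)).indicator (fun _ => c j) x)
            (fun _ _ => zero_le) hi
  calc ∫⁻ x, g x ∂μ ≤ ∫⁻ x, (B + ∑ i ∈ s, (toMeasurable μ (F i)).indicator (fun _ => c i) x) ∂μ :=
        lintegral_mono hpt
    _ = B * μ univ + ∑ i ∈ s, c i * μ (F i) := by
        rw [lintegral_add_left measurable_const, lintegral_const,
          lintegral_finsetSum _ fun _ _ =>
            measurable_const.indicator (measurableSet_toMeasurable _ _)]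
        simp only [lintegral_indicator_const (measurableSet_toMeasurable _ _), measure_toMeasurable]

lemma neg_biInf_le_sub {X : Type*} {ϱ : X → ℝ≥0∞} {f : X → EReal} {F : Set X} {a M : ℝ}
    (hF : ∀ x ∈ F, (a : EReal) ≤ f x) (hM : ∀ x, f x - ϱ x ≤ M) :
    -(⨅ x ∈ F, (ϱ x : EReal)) ≤ (M - a : ℝ) := by
  rw [EReal.neg_le, ← EReal.coe_neg, neg_sub]
  refine le_iInf₂ fun x hx => ?_
  rw [EReal.coe_sub,
    EReal.sub_le_iff_le_add (.inl (EReal.coe_ne_bot M)) (.inl (EReal.coe_ne_top M)), add_comm]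
  exact (hF x hx).trans ((EReal.sub_le_iff_le_add (.inr (EReal.coe_ne_top M))
    (.inr (EReal.coe_ne_bot M))).1 (hM x))

lemma lintegral_exp_mul_le_add_sum {X : Type*} [MeasurableSpace X] (μ : Measure X)
    [IsProbabilityMeasure μ] {f : X → EReal} (hf0 : ∀ x, f x ≤ 0) {b δ : ℝ} {m : ℕ}
    (hδ : 0 < δ) (hm : 0 < m) (hmδ : b + m * δ = 0) (n : ℕ) :
    ∫⁻ x, EReal.exp (((n : ℝ) : EReal) * f x) ∂μ ≤ EReal.exp (b * n) +
      ∑ j ∈ Finset.range m, EReal.exp ((b + (j + 1) * δ : ℝ) * n) *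
        μ (f ⁻¹' Icc ((b + j * δ : ℝ) : EReal) ((b + (j + 1) * δ : ℝ) : EReal)) := by
  have hn : (0 : EReal) ≤ n := by exact_mod_cast n.zero_le
  have hexp : ∀ {s t : EReal}, s ≤ t → EReal.exp (n * s) ≤ EReal.exp (t * n) := fun hst =>
    EReal.exp_monotone (mul_comm (n : EReal) _ ▸ mul_le_mul_of_nonneg_left hst hn)
  simpa only [measure_univ, mul_one] using lintegral_le_mul_add_sum_mul_measure (μ := μ) fun x => by
    rcases le_or_gt (f x) b with hxb | hbx
    · exact .inl (hexp hxb)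
    · obtain ⟨t, ht⟩ : ∃ t : ℝ, (t : EReal) = f x :=
        ⟨(f x).toReal, EReal.coe_toReal ((hf0 x).trans_lt EReal.zero_lt_top).ne
          (EReal.bot_lt_coe b |>.trans hbx).ne'⟩
      have hbt : b ≤ t := by exact_mod_cast (ht ▸ hbx).le
      have ht0 : t ≤ 0 := by exact_mod_cast ht ▸ hf0 x
      obtain ⟨j, hj, hjt⟩ := exists_lt_mem_Icc_add_mul hδ hm hbt (hmδ ▸ ht0)
      refine .inr ⟨j, Finset.mem_range.2 hj, ?_, hexp (ht ▸ EReal.coe_le_coe hjt.2)⟩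
      rw [mem_preimage, ← ht]
      exact ⟨EReal.coe_le_coe hjt.1, EReal.coe_le_coe hjt.2⟩

lemma HasLDP.expGrowthSup_le {X : Type*} [TopologicalSpace X] [MeasurableSpace X]
    {ν : ℕ → Measure X} {ρ : X → ℝ≥0∞} (h : HasLDP ν ρ) {F : Set X} (hF : IsClosed F) :
    expGrowthSup (fun n => ν n F) ≤ -(⨅ x ∈ F, (ρ x : EReal)) := by
  rw [← limsup_inv_mul_log_eq_expGrowthSup]
  exact h.2.1 F hF

lemma expGrowthSup_lintegral_exp_mul_le_zero {X : Type*} [MeasurableSpace X]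
    (μ : ℕ → Measure X) [∀ n, IsProbabilityMeasure (μ n)] {f : X → EReal}
    (hf0 : ∀ x, f x ≤ 0) :
    expGrowthSup (fun n => ∫⁻ x, EReal.exp (((n : ℝ) : EReal) * f x) ∂μ n) ≤ 0 := by
  refine Eventually.expGrowthSup_le (Eventually.of_forall fun n => ?_)
  calc ∫⁻ x, EReal.exp (((n : ℝ) : EReal) * f x) ∂μ n ≤ ∫⁻ _, 1 ∂μ n :=
        lintegral_mono fun x => EReal.exp_le_one_iff.2
          (mul_nonpos_of_nonneg_of_nonpos (by exact_mod_cast n.zero_le) (hf0 x))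
    _ = EReal.exp (0 * n) := by simp

lemma HasLDP.expGrowthSup_lintegral_exp_mul_le {X : Type*} [TopologicalSpace X]
    [MeasurableSpace X] {ξ : ℕ → Measure X} [∀ n, IsProbabilityMeasure (ξ n)] {ϱ : X → ℝ≥0∞}
    (hLDP : HasLDP ξ ϱ) {f : X → EReal} (hf0 : ∀ x, f x ≤ 0)
    (hclosed : ∀ a b : ℝ, (⨆ x, (f x - (ϱ x : EReal))) ≤ (a : EReal) → a ≤ b → b ≤ 0 →
      IsClosed (f ⁻¹' Set.Icc (a : EReal) (b : EReal)))
    {b : ℝ} (hb : (⨆ x, (f x - (ϱ x : EReal))) < b) (hb0 : b < 0) :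
    expGrowthSup (fun n => ∫⁻ x, EReal.exp (((n : ℝ) : EReal) * f x) ∂ξ n) ≤ b := by
  obtain ⟨M, hM, hMb⟩ := EReal.exists_between_coe_real hb
  replace hMb : M < b := EReal.coe_lt_coe_iff.1 hMb
  set m := ⌈-b / (b - M)⌉₊
  have hm : 0 < m := Nat.ceil_pos.2 (div_pos (by linarith) (by linarith))
  set δ := -b / m
  have hδ : 0 < δ := div_pos (by linarith) (by exact_mod_cast hm)
  have hδM : δ ≤ b - M :=
    div_le_of_le_mul₀ (by positivity) (by linarith) ((div_le_iff₀' (by linarith)).1 (Nat.le_ceil _))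
  have hmδ : b + m * δ = 0 := by
    simp only [δ]
    field_simp
    ring
  set S : ℕ → Set X := fun j => f ⁻¹' Icc ((b + j * δ : ℝ) : EReal) ((b + (j + 1) * δ : ℝ) : EReal)
  have hS : ∀ j ∈ Finset.range m, expGrowthSup (fun n => ξ n (S j)) ≤ (M - (b + j * δ) : ℝ) := by
    intro j hj
    have hj : (j + 1 : ℝ) ≤ m := by exact_mod_cast Finset.mem_range.1 hj
    refine (hLDP.expGrowthSup_le (hclosed _ _ ?_ ?_ ?_)).trans
      (neg_biInf_le_sub (fun x hx => hx.1) fun x => (le_iSup _ x).trans hM.le)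
    · exact hM.le.trans (EReal.coe_le_coe (by nlinarith))
    · nlinarith
    · nlinarith
  calc expGrowthSup (fun n => ∫⁻ x, EReal.exp (((n : ℝ) : EReal) * f x) ∂ξ n)
      ≤ expGrowthSup ((fun n : ℕ => EReal.exp (b * n)) + ∑ j ∈ Finset.range m,
          fun n : ℕ => EReal.exp ((b + (j + 1) * δ : ℝ) * n) * ξ n (S j)) :=
        expGrowthSup_monotone fun n => by
          simp only [Pi.add_apply, Finset.sum_apply]
          exact lintegral_exp_mul_le_add_sum (ξ n) hf0 hδ hm hmδ n
    _ = (b : EReal) ⊔ ⨆ j ∈ Finset.range m,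
          expGrowthSup (fun n : ℕ => EReal.exp ((b + (j + 1) * δ : ℝ) * n) * ξ n (S j)) := by
        rw [expGrowthSup_add, expGrowthSup_exp, expGrowthSup_sum]
    _ ≤ b := by
        refine sup_le le_rfl (iSup₂_le fun j hj => ?_)
        refine (expGrowthSup_exp_mul_le _ _).trans ((add_le_add_right (hS j hj) _).trans ?_)
        rw [← EReal.coe_add]
        exact EReal.coe_le_coe (by linarith)

theorem stmt2_general {X : Type*} [TopologicalSpace X] [MeasurableSpace X]
    (ξ : ℕ → Measure X) [∀ n, IsProbabilityMeasure (ξ n)]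
    (ϱ : X → ℝ≥0∞) (hLDP : HasLDP ξ ϱ)
    (f : X → EReal) (hf0 : ∀ x, f x ≤ 0)
    (hclosed : ∀ a b : ℝ,
      (⨆ x, (f x - (ϱ x : EReal))) ≤ (a : EReal) → a ≤ b → b ≤ 0 →
      IsClosed (f ⁻¹' Set.Icc (a : EReal) (b : EReal))) :
    Filter.limsup
        (fun n : ℕ => ((n : ℝ)⁻¹ : EReal) *
          ENNReal.log (∫⁻ x, EReal.exp (((n : ℝ) : EReal) * f x) ∂(ξ n)))
        Filter.atTop
      ≤ ⨆ x, (f x - (ϱ x : EReal)) := by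
  rw [limsup_inv_mul_log_eq_expGrowthSup]
  refine EReal.le_of_forall_lt_iff_le.1 fun b hb => ?_
  rcases le_or_gt 0 b with hb0 | hb0
  · exact (expGrowthSup_lintegral_exp_mul_le_zero ξ hf0).trans (EReal.coe_nonneg.2 hb0)
  · exact hLDP.expGrowthSup_lintegral_exp_mul_le hf0 hclosed hb hb0

theorem stmt2 {X : Type*} [TopologicalSpace X] [MeasurableSpace X] [BorelSpace X]
    (ξ : ℕ → Measure X) [∀ n, IsProbabilityMeasure (ξ n)]
    (ϱ : X → ℝ≥0∞) (hLDP : HasLDP ξ ϱ)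
    (f : X → EReal) (hf0 : ∀ x, f x ≤ 0) (hfm : Measurable f)
    (hclosed : ∀ a b : ℝ,
      (⨆ x, (f x - (ϱ x : EReal))) ≤ (a : EReal) → a ≤ b → b ≤ 0 →
      IsClosed (f ⁻¹' Set.Icc (a : EReal) (b : EReal))) :
    Filter.limsup
        (fun n : ℕ => ((n : ℝ)⁻¹ : EReal) *
          ENNReal.log (∫⁻ x, EReal.exp (((n : ℝ) : EReal) * f x) ∂(ξ n)))
        Filter.atTop
      ≤ ⨆ x, (f x - (ϱ x : EReal)) :=
  stmt2_general ξ ϱ hLDP f hf0 hclosed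
end

section
/- Let R be a nonempty closed subset of [0,∞) and define I : ℝ → [0,∞] by I(a) = inf_{γ∈R} ℓ(γ;a). Then for every a ∈ ℝ, I(a) = 0 if and only if a ∈ R. -/
open MeasureTheory Set
open scoped ENNReal NNReal

/-! The rate function dominates the squared Hellinger distance `(√γ - √a)²`. Since `√` maps
`R` onto the closed set `{s ≥ 0 | s² ∈ R}`, a point `a ∉ R` keeps `√a` at positive distance
from all `√γ`, `γ ∈ R`, which bounds the infimum away from `0`. -/

/-- The Fenchel-Legendre transform of the Poisson cumulant generating function
with parameter `γ ∈ [0,∞)`, evaluated at `a ∈ ℝ`. -/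
noncomputable def ell (γ a : ℝ) : ℝ≥0∞ :=
  if a < 0 then ⊤
  else if a = 0 then ENNReal.ofReal γ
  else if γ = 0 then ⊤
  else ENNReal.ofReal (γ - a + a * Real.log (a / γ))

lemma ell_of_neg {γ a : ℝ} (ha : a < 0) : ell γ a = ⊤ := by
  simp [ell, ha]

lemma ell_self {a : ℝ} (ha : 0 ≤ a) : ell a a = 0 := by
  rcases ha.eq_or_lt with rfl | ha
  · simp [ell]
  · simp [ell, ha.not_gt, ha.ne']

lemma sq_sub_le_sq_sub_sq_add_mul_log {s t : ℝ} (hs : 0 < s) (ht : 0 < t) :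
    (t - s) ^ 2 ≤ t ^ 2 - s ^ 2 + s ^ 2 * Real.log (s ^ 2 / t ^ 2) := by
  have hlog : 1 - t / s ≤ Real.log (s / t) := by
    simpa using Real.one_sub_inv_le_log_of_pos (div_pos hs ht)
  have hlog_sq : Real.log (s ^ 2 / t ^ 2) = 2 * Real.log (s / t) := by
    rw [← div_pow, Real.log_pow]; push_cast; ring
  have hexpand : s ^ 2 * (1 - t / s) = s ^ 2 - s * t := by field_simp
  rw [hlog_sq]
  nlinarith [mul_le_mul_of_nonneg_left hlog (sq_nonneg s), hexpand]

lemma ofReal_sq_sqrt_sub_sqrt_le_ell {γ a : ℝ} (hγ : 0 ≤ γ) (ha : 0 ≤ a) :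
    ENNReal.ofReal ((√γ - √a) ^ 2) ≤ ell γ a := by
  rcases ha.eq_or_lt with rfl | ha
  · simp [ell, Real.sq_sqrt hγ]
  rcases hγ.eq_or_lt with rfl | hγ
  · simp [ell, ha.not_gt, ha.ne']
  simp only [ell, ha.not_gt, ha.ne', hγ.ne', if_false]
  refine ENNReal.ofReal_le_ofReal ?_
  simpa only [Real.sq_sqrt ha.le, Real.sq_sqrt hγ.le] using
    sq_sub_le_sq_sub_sq_add_mul_log (Real.sqrt_pos.2 ha) (Real.sqrt_pos.2 hγ)

lemma isClosed_setOf_nonneg_sq_mem {R : Set ℝ} (hR : IsClosed R) :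
    IsClosed {s : ℝ | 0 ≤ s ∧ s ^ 2 ∈ R} :=
  isClosed_Ici.inter (hR.preimage (continuous_pow 2))

lemma exists_pos_le_ell_of_notMem {R : Set ℝ} (hRc : IsClosed R) (hR0 : R ⊆ Ici 0) {a : ℝ}
    (ha : a ∉ R) : ∃ c : ℝ≥0∞, 0 < c ∧ ∀ γ ∈ R, c ≤ ell γ a := by
  rcases lt_or_ge a 0 with ha_neg | ha_nonneg
  · exact ⟨1, one_pos, fun γ _ => (ell_of_neg ha_neg).symm ▸ le_top⟩
  set S := {s : ℝ | 0 ≤ s ∧ s ^ 2 ∈ R}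
  have hsqrt_a : √a ∈ Sᶜ := fun h => ha (Real.sq_sqrt ha_nonneg ▸ h.2)
  obtain ⟨ε, hε, hball⟩ :=
    Metric.isOpen_iff.1 (isClosed_setOf_nonneg_sq_mem hRc).isOpen_compl _ hsqrt_a
  refine ⟨ENNReal.ofReal (ε ^ 2), ENNReal.ofReal_pos.2 (by positivity), fun γ hγ => ?_⟩
  have hγ0 : 0 ≤ γ := hR0 hγ
  have hsqrt_γ : √γ ∈ S := ⟨Real.sqrt_nonneg γ, (Real.sq_sqrt hγ0).symm ▸ hγ⟩
  have hdist : ε ≤ |√γ - √a| := by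
    by_contra! h
    exact hball (by rwa [Metric.mem_ball, Real.dist_eq]) hsqrt_γ
  calc ENNReal.ofReal (ε ^ 2) ≤ ENNReal.ofReal ((√γ - √a) ^ 2) := by
        refine ENNReal.ofReal_le_ofReal ?_
        simpa only [sq_abs] using pow_le_pow_left₀ hε.le hdist 2
    _ ≤ ell γ a := ofReal_sq_sqrt_sub_sqrt_le_ell hγ0 ha_nonneg

theorem stmt5_general (R : Set ℝ) (hRc : IsClosed R) (hR0 : R ⊆ Set.Ici 0)
    (a : ℝ) : (⨅ γ ∈ R, ell γ a) = 0 ↔ a ∈ R := by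
  constructor
  · intro h
    by_contra ha
    obtain ⟨c, hc, hle⟩ := exists_pos_le_ell_of_notMem hRc hR0 ha
    exact hc.ne' (le_zero_iff.1 (h ▸ le_iInf₂ hle))
  · intro ha
    exact le_zero_iff.1 ((biInf_le _ ha).trans_eq (ell_self (hR0 ha)))

theorem stmt5 (R : Set ℝ) (hR : R.Nonempty) (hRc : IsClosed R) (hR0 : R ⊆ Set.Ici 0)
    (a : ℝ) : (⨅ γ ∈ R, ell γ a) = 0 ↔ a ∈ R :=
  stmt5_general R hRc hR0 a
end

section
/- Let R be a nonempty closed subset of [0,∞) and define I : ℝ → [0,∞] by I(a) = inf_{γ∈R} ℓ(γ;a). Suppose a ∈ ℝ satisfies a ∉ R, R ∩ (−∞,a) ≠ ∅ and R ∩ (a,∞) ≠ ∅, and set c₋ = sup(R ∩ (−∞,a)) and c₊ = inf(R ∩ (a,∞)). Then c₋ < a < c₊ with c₋, c₊ ∈ R, and for every b ∈ [c₋, c₊] one has I(b) = min{ℓ(c₋; b), ℓ(c₊; b)}. -/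
open MeasureTheory Set
open scoped ENNReal NNReal

/-!
For `b, γ > 0` one has `ℓ(γ; b) = f(γ) - f(b)` with `f(γ) = γ - b log γ`, which decreases on
`(0, b]` and increases on `[b, ∞)`, while `ℓ(0; b) = ∞`; so `ℓ(·; b)` is antitone on `[0, b]` and
monotone on `[b, ∞)`. As `R` is closed and `a ∉ R`, the endpoints of the gap `(c₋, c₊)` of `R`
around `a` lie in `R`, and every `γ ∈ R` satisfies `γ ≤ c₋ ≤ b` or `b ≤ c₊ ≤ γ`.
-/

open Real

section Gap

variable {α : Type*} [ConditionallyCompleteLinearOrder α] {R : Set α} {a : α}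

theorem le_csSup_inter_Iio_or_csInf_inter_Ioi_le (ha : a ∉ R) {r : α} (hr : r ∈ R) :
    r ≤ sSup (R ∩ Iio a) ∨ sInf (R ∩ Ioi a) ≤ r := by
  rcases lt_trichotomy r a with h | rfl | h
  · exact Or.inl (le_csSup ⟨a, fun _ hx => hx.2.le⟩ ⟨hr, h⟩)
  · exact absurd hr ha
  · exact Or.inr (csInf_le ⟨a, fun _ hx => hx.2.le⟩ ⟨hr, h⟩)

variable [TopologicalSpace α] [OrderTopology α]

theorem IsClosed.csSup_inter_Iio_mem (hRc : IsClosed R) (h : (R ∩ Iio a).Nonempty) :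
    sSup (R ∩ Iio a) ∈ R :=
  hRc.closure_subset_iff.mpr inter_subset_left (csSup_mem_closure h ⟨a, fun _ hx => hx.2.le⟩)

theorem IsClosed.csInf_inter_Ioi_mem (hRc : IsClosed R) (h : (R ∩ Ioi a).Nonempty) :
    sInf (R ∩ Ioi a) ∈ R :=
  hRc.closure_subset_iff.mpr inter_subset_left (csInf_mem_closure h ⟨a, fun _ hx => hx.2.le⟩)

theorem IsClosed.csSup_inter_Iio_lt (hRc : IsClosed R) (ha : a ∉ R) (h : (R ∩ Iio a).Nonempty) :
    sSup (R ∩ Iio a) < a :=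
  (csSup_le h fun _ hx => hx.2.le).lt_of_ne fun he => ha (he ▸ hRc.csSup_inter_Iio_mem h)

theorem IsClosed.lt_csInf_inter_Ioi (hRc : IsClosed R) (ha : a ∉ R) (h : (R ∩ Ioi a).Nonempty) :
    a < sInf (R ∩ Ioi a) :=
  (le_csInf h fun _ hx => hx.2.le).lt_of_ne fun he => ha (he ▸ hRc.csInf_inter_Ioi_mem h)

end Gap

theorem antitoneOn_sub_mul_log (b : ℝ) : AntitoneOn (fun x => x - b * log x) (Ioc 0 b) := by
  intro x hx y hy hxy
  have hlog : 1 - x / y ≤ log y - log x := by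
    simpa [log_div hy.1.ne' hx.1.ne'] using one_sub_inv_le_log_of_pos (div_pos hy.1 hx.1)
  have hmono : 0 ≤ log y - log x := sub_nonneg.mpr (log_le_log hx.1 hxy)
  have hy_mul : y - x ≤ y * (log y - log x) :=
    calc y - x = y * (1 - x / y) := by field_simp [hy.1.ne']
      _ ≤ y * (log y - log x) := mul_le_mul_of_nonneg_left hlog hy.1.le
  dsimp only
  nlinarith [mul_le_mul_of_nonneg_right hy.2 hmono]

theorem monotoneOn_sub_mul_log {b : ℝ} (hb : 0 < b) :
    MonotoneOn (fun x => x - b * log x) (Ici b) := by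
  intro x hx y hy hxy
  have hx0 : 0 < x := hb.trans_le hx
  have hy0 : 0 < y := hx0.trans_le hxy
  have hlog : log y - log x ≤ y / x - 1 := by
    simpa [log_div hy0.ne' hx0.ne'] using log_le_sub_one_of_pos (div_pos hy0 hx0)
  have hmono : 0 ≤ log y - log x := sub_nonneg.mpr (log_le_log hx0 hxy)
  have hx_mul : x * (log y - log x) ≤ y - x :=
    calc x * (log y - log x) ≤ x * (y / x - 1) := mul_le_mul_of_nonneg_left hlog hx0.le
      _ = y - x := by field_simp
  dsimp only
  nlinarith [mul_le_mul_of_nonneg_right (show b ≤ x from hx) hmono]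

theorem ell_zero_left {b : ℝ} (hb : 0 < b) : ell 0 b = ⊤ := by
  simp [ell, hb.ne', not_lt.mpr hb.le]

theorem ell_zero_right (γ : ℝ) : ell γ 0 = ENNReal.ofReal γ := by
  simp [ell]

theorem ell_of_pos {γ b : ℝ} (hγ : 0 < γ) (hb : 0 < b) :
    ell γ b = ENNReal.ofReal ((γ - b * log γ) - (b - b * log b)) := by
  rw [ell, if_neg (not_lt.mpr hb.le), if_neg hb.ne', if_neg hγ.ne', log_div hb.ne' hγ.ne']
  ring_nf

theorem ell_antitoneOn (b : ℝ) : AntitoneOn (fun γ => ell γ b) (Icc 0 b) := by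
  intro x hx y hy hxy
  rcases hx.1.eq_or_lt with rfl | hx0
  · rcases (hy.1.trans hy.2).eq_or_lt with rfl | hb
    · rw [le_antisymm hy.2 hy.1]
    · simp [ell_zero_left hb]
  · have hb := hx0.trans_le hx.2
    have hy0 := hx0.trans_le hxy
    simp only [ell_of_pos hx0 hb, ell_of_pos hy0 hb]
    exact ENNReal.ofReal_le_ofReal
      (sub_le_sub_right (antitoneOn_sub_mul_log b ⟨hx0, hx.2⟩ ⟨hy0, hy.2⟩ hxy) _)

theorem ell_monotoneOn {b : ℝ} (hb : 0 ≤ b) : MonotoneOn (fun γ => ell γ b) (Ici b) := by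
  intro x hx y hy hxy
  rcases hb.eq_or_lt with rfl | hb
  · simp only [ell_zero_right]
    exact ENNReal.ofReal_le_ofReal hxy
  · simp only [ell_of_pos (hb.trans_le hx) hb, ell_of_pos (hb.trans_le hy) hb]
    exact ENNReal.ofReal_le_ofReal (sub_le_sub_right (monotoneOn_sub_mul_log hb hx hy hxy) _)

theorem iInf_ell_eq_min {R : Set ℝ} (hR0 : R ⊆ Ici 0) {c₁ c₂ b : ℝ} (hc₁ : c₁ ∈ R)
    (hc₂ : c₂ ∈ R) (hgap : ∀ r ∈ R, r ≤ c₁ ∨ c₂ ≤ r) (hb : b ∈ Icc c₁ c₂) :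
    (⨅ γ ∈ R, ell γ b) = min (ell c₁ b) (ell c₂ b) := by
  refine le_antisymm (le_min (iInf₂_le c₁ hc₁) (iInf₂_le c₂ hc₂)) (le_iInf₂ fun γ hγ => ?_)
  have hb0 : 0 ≤ b := (hR0 hc₁).trans hb.1
  rcases hgap γ hγ with h | h
  · exact (min_le_left _ _).trans <| ell_antitoneOn b ⟨hR0 hγ, h.trans hb.1⟩
      ⟨hR0 hc₁, hb.1⟩ h
  · exact (min_le_right _ _).trans <| ell_monotoneOn hb0 hb.2 (hb.2.trans h) h

theorem stmt7_general (R : Set ℝ) (hRc : IsClosed R) (hR0 : R ⊆ Set.Ici 0)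
    (a : ℝ) (ha : a ∉ R)
    (h₁ : (R ∩ Set.Iio a).Nonempty) (h₂ : (R ∩ Set.Ioi a).Nonempty) :
    sSup (R ∩ Set.Iio a) < a ∧ a < sInf (R ∩ Set.Ioi a) ∧
      sSup (R ∩ Set.Iio a) ∈ R ∧ sInf (R ∩ Set.Ioi a) ∈ R ∧
      ∀ b ∈ Set.Icc (sSup (R ∩ Set.Iio a)) (sInf (R ∩ Set.Ioi a)),
        (⨅ γ ∈ R, ell γ b) =
          min (ell (sSup (R ∩ Set.Iio a)) b) (ell (sInf (R ∩ Set.Ioi a)) b) := by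
  have hc₁ := hRc.csSup_inter_Iio_mem h₁
  have hc₂ := hRc.csInf_inter_Ioi_mem h₂
  have hgap := fun r (hr : r ∈ R) => le_csSup_inter_Iio_or_csInf_inter_Ioi_le ha hr
  exact ⟨hRc.csSup_inter_Iio_lt ha h₁, hRc.lt_csInf_inter_Ioi ha h₂, hc₁, hc₂,
    fun _ => iInf_ell_eq_min hR0 hc₁ hc₂ hgap⟩

theorem stmt7 (R : Set ℝ) (hR : R.Nonempty) (hRc : IsClosed R) (hR0 : R ⊆ Set.Ici 0)
    (a : ℝ) (ha : a ∉ R)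
    (h₁ : (R ∩ Set.Iio a).Nonempty) (h₂ : (R ∩ Set.Ioi a).Nonempty) :
    sSup (R ∩ Set.Iio a) < a ∧ a < sInf (R ∩ Set.Ioi a) ∧
      sSup (R ∩ Set.Iio a) ∈ R ∧ sInf (R ∩ Set.Ioi a) ∈ R ∧
      ∀ b ∈ Set.Icc (sSup (R ∩ Set.Iio a)) (sInf (R ∩ Set.Ioi a)),
        (⨅ γ ∈ R, ell γ b) =
          min (ell (sSup (R ∩ Set.Iio a)) b) (ell (sInf (R ∩ Set.Ioi a)) b) :=
  stmt7_general R hRc hR0 a ha h₁ h₂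
end

section
/- Let 0 < α < β < γ < δ < ∞, let R = [α,β] ∪ [γ,δ], and define I : ℝ → [0,∞] by I(a) = inf_{c∈R} ℓ(c;a). Then I(a) = ∞ for a < 0; I(a) = ℓ(α;a) for a ∈ [0,α]; I(a) = 0 for a ∈ [α,β] ∪ [γ,δ]; I(a) = min{ℓ(β;a), ℓ(γ;a)} for a ∈ [β,γ]; and I(a) = ℓ(δ;a) for a ∈ [δ,∞). -/
open MeasureTheory Set
open scoped ENNReal NNReal

/-! For fixed `a > 0`, `c ↦ ℓ(c;a)` has derivative `1 - a/c`: it decreases on `(0, a]`, vanishes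
at `c = a` and increases on `[a, ∞)`. So the infimum over an interval of rates is `0` when the
interval contains `a`, and is otherwise attained at the endpoint nearest to `a`; the infimum over
`[α,β] ∪ [γ,δ]` is the smaller of the two interval infima. -/

theorem biInf_eq_of_mem_of_forall_le {ι κ : Type*} [CompleteLattice κ] {f : ι → κ} {s : Set ι}
    {i : ι} (hi : i ∈ s) (h : ∀ j ∈ s, f i ≤ f j) : ⨅ j ∈ s, f j = f i :=
  le_antisymm (iInf₂_le i hi) (le_iInf₂ h)

namespace ell

theorem of_neg {c a : ℝ} (ha : a < 0) : ell c a = ⊤ := by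
  simp [ell, ha]

theorem of_pos {c a : ℝ} (hc : 0 < c) (ha : 0 < a) :
    ell c a = ENNReal.ofReal (c - a + a * Real.log (a / c)) := by
  simp [ell, ha.not_gt, ha.ne', hc.ne']

theorem self {a : ℝ} (ha : 0 < a) : ell a a = 0 := by
  simp [of_pos ha ha, div_self ha.ne']

theorem monotoneOn_Ici {a : ℝ} (ha : 0 ≤ a) : MonotoneOn (ell · a) (Ici a) := by
  intro c₁ hac c₂ _ h12
  dsimp only
  rcases ha.eq_or_lt with rfl | ha
  · simpa [ell] using ENNReal.ofReal_le_ofReal h12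
  have hc₁ : 0 < c₁ := ha.trans_le hac
  have hc₂ : 0 < c₂ := hc₁.trans_le h12
  rw [of_pos hc₁ ha, of_pos hc₂ ha]
  refine ENNReal.ofReal_le_ofReal ?_
  have hlog : Real.log (c₂ / c₁) ≤ c₂ / c₁ - 1 := Real.log_le_sub_one_of_pos (by positivity)
  have hratio : a * (c₂ / c₁ - 1) ≤ c₂ - c₁ := by
    rw [div_sub_one hc₁.ne', mul_div_assoc']
    exact (div_le_iff₀ hc₁).2 (by nlinarith [mem_Ici.1 hac])
  rw [Real.log_div ha.ne' hc₁.ne', Real.log_div ha.ne' hc₂.ne']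
  rw [Real.log_div hc₂.ne' hc₁.ne'] at hlog
  nlinarith

theorem antitoneOn_Ioc {a : ℝ} : AntitoneOn (ell · a) (Ioc 0 a) := by
  rintro c₁ ⟨hc₁, -⟩ c₂ ⟨-, hca⟩ h12
  dsimp only
  have hc₂ : 0 < c₂ := hc₁.trans_le h12
  have ha : 0 < a := hc₂.trans_le hca
  rw [of_pos hc₁ ha, of_pos hc₂ ha]
  refine ENNReal.ofReal_le_ofReal ?_
  have hlog : 1 - (c₂ / c₁)⁻¹ ≤ Real.log (c₂ / c₁) :=
    Real.one_sub_inv_le_log_of_pos (by positivity)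
  have hratio : c₂ - c₁ ≤ a * (1 - (c₂ / c₁)⁻¹) := by
    rw [inv_div, one_sub_div hc₂.ne', mul_div_assoc']
    exact (le_div_iff₀ hc₂).2 (by nlinarith)
  rw [Real.log_div ha.ne' hc₁.ne', Real.log_div ha.ne' hc₂.ne']
  rw [Real.log_div hc₂.ne' hc₁.ne'] at hlog
  nlinarith

theorem iInf_Icc_of_le {a c₁ c₂ : ℝ} (ha : 0 ≤ a) (hac : a ≤ c₁) (h12 : c₁ ≤ c₂) :
    ⨅ c ∈ Icc c₁ c₂, ell c a = ell c₁ a :=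
  biInf_eq_of_mem_of_forall_le (left_mem_Icc.2 h12) fun _ hc =>
    monotoneOn_Ici ha hac (hac.trans hc.1) hc.1

theorem iInf_Icc_of_ge {a c₁ c₂ : ℝ} (hc₁ : 0 < c₁) (h12 : c₁ ≤ c₂) (hca : c₂ ≤ a) :
    ⨅ c ∈ Icc c₁ c₂, ell c a = ell c₂ a :=
  biInf_eq_of_mem_of_forall_le (right_mem_Icc.2 h12) fun _ hc =>
    antitoneOn_Ioc ⟨hc₁.trans_le hc.1, hc.2.trans hca⟩ ⟨hc₁.trans_le h12, hca⟩ hc.2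

theorem iInf_Icc_of_mem {a c₁ c₂ : ℝ} (hc₁ : 0 < c₁) (ha : a ∈ Icc c₁ c₂) :
    ⨅ c ∈ Icc c₁ c₂, ell c a = 0 :=
  nonpos_iff_eq_zero.1 <| (iInf₂_le a ha).trans_eq (self (hc₁.trans_le ha.1))

end ell

theorem stmt8 (α β γ δ : ℝ) (h0 : 0 < α) (h1 : α < β) (h2 : β < γ) (h3 : γ < δ) :
    (∀ a : ℝ, a < 0 → (⨅ c ∈ Set.Icc α β ∪ Set.Icc γ δ, ell c a) = ⊤) ∧
    (∀ a ∈ Set.Icc (0 : ℝ) α, (⨅ c ∈ Set.Icc α β ∪ Set.Icc γ δ, ell c a) = ell α a) ∧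
    (∀ a ∈ Set.Icc α β ∪ Set.Icc γ δ, (⨅ c ∈ Set.Icc α β ∪ Set.Icc γ δ, ell c a) = 0) ∧
    (∀ a ∈ Set.Icc β γ,
      (⨅ c ∈ Set.Icc α β ∪ Set.Icc γ δ, ell c a) = min (ell β a) (ell γ a)) ∧
    (∀ a ∈ Set.Ici δ, (⨅ c ∈ Set.Icc α β ∪ Set.Icc γ δ, ell c a) = ell δ a) := by
  have hγ : 0 < γ := by linarith
  simp only [iInf_union]
  refine ⟨fun a ha => by simp [ell.of_neg ha], ?_, ?_, ?_, ?_⟩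
  · rintro a ⟨ha0, haα⟩
    have hαγ : α ≤ γ := by linarith
    rw [ell.iInf_Icc_of_le ha0 haα h1.le, ell.iInf_Icc_of_le ha0 (haα.trans hαγ) h3.le]
    exact inf_eq_left.2 (ell.monotoneOn_Ici ha0 haα (haα.trans hαγ) hαγ)
  · rintro a (ha | ha)
    · rw [ell.iInf_Icc_of_mem h0 ha]
      exact inf_eq_left.2 zero_le
    · rw [ell.iInf_Icc_of_mem hγ ha]
      exact inf_eq_right.2 zero_le
  · rintro a ⟨haβ, haγ⟩
    rw [ell.iInf_Icc_of_ge h0 h1.le haβ, ell.iInf_Icc_of_le (by linarith) haγ h3.le]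
  · intro a (haδ : δ ≤ a)
    have hβδ : β ≤ δ := by linarith
    rw [ell.iInf_Icc_of_ge h0 h1.le (hβδ.trans haδ), ell.iInf_Icc_of_ge hγ h3.le haδ]
    exact inf_eq_right.2
      (ell.antitoneOn_Ioc ⟨h0.trans h1, hβδ.trans haδ⟩ ⟨hγ.trans h3, haδ⟩ hβδ)
end

section
/- Let E be a metric space, let λ, κ, μ : E → [0,∞) be continuous and bounded, let t > 0, and let f₁, f₂ : [0,∞) → E be Borel measurable. For x ∈ [0,t] define g_x : [0,∞) → E by g_x(s) = f₁(s) if s < x and g_x(s) = f₂(s) if s ≥ x. Then for every real number c lying between φ_t(f₁) and φ_t(f₂) (i.e. min{φ_t(f₁), φ_t(f₂)} ≤ c ≤ max{φ_t(f₁), φ_t(f₂)}) there exists x ∈ [0,t] with φ_t(g_x) = c. -/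
open MeasureTheory Set Filter
open scoped ENNReal Topology

/-- The random Poisson parameter functional:
`φ_t(f) = ∫₀ᵗ λ(f(s)) · exp(−κ(f(s)) · ∫ₛᵗ μ(f(r)) dr) ds`. -/
noncomputable def phi {E : Type*} (lam kap mu : E → ℝ) (t : ℝ) (f : ℝ → E) : ℝ :=
  ∫ s in (0 : ℝ)..t, lam (f s) * Real.exp (-(kap (f s)) * ∫ r in s..t, mu (f r))

/-!
For fixed `s ≠ x`, `g_y s` is locally constant in `y`, and `y ↦ ∫ₛᵗ μ(g_y r) dr` is continuous by
dominated convergence. A second application of dominated convergence, with the integrand bounded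
by `sup λ` because the exponent is nonpositive, makes `x ↦ φ_t(g_x)` continuous. Since `g_0 = f₂`
and `g_t = f₁` on `(0, t)`, the intermediate value theorem on `[0, t]` gives the claim.
-/

open intervalIntegral
open scoped Interval

section Splice

variable {E : Type*} (f₁ f₂ : ℝ → E)

noncomputable def splice (x : ℝ) : ℝ → E := fun s => if s < x then f₁ s else f₂ s

variable {f₁ f₂}

theorem splice_of_lt {x s : ℝ} (h : s < x) : splice f₁ f₂ x s = f₁ s := if_pos h

theorem splice_of_le {x s : ℝ} (h : x ≤ s) : splice f₁ f₂ x s = f₂ s := if_neg h.not_gt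

theorem measurable_splice [MeasurableSpace E] (hf₁ : Measurable f₁) (hf₂ : Measurable f₂)
    (x : ℝ) : Measurable (splice f₁ f₂ x) :=
  Measurable.ite (measurableSet_lt measurable_id measurable_const) hf₁ hf₂

theorem eventually_splice_eq {x₀ s : ℝ} (hs : s ≠ x₀) :
    ∀ᶠ x in 𝓝 x₀, splice f₁ f₂ x s = splice f₁ f₂ x₀ s := by
  rcases hs.lt_or_gt with h | h
  · filter_upwards [eventually_gt_nhds h] with x hx
    rw [splice_of_lt hx, splice_of_lt h]
  · filter_upwards [eventually_lt_nhds h] with x hx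
    rw [splice_of_le hx.le, splice_of_le h.le]

end Splice

section ParametricIntegral

variable {μ : Measure ℝ}

theorem intervalIntegrable_of_abs_le [IsLocallyFiniteMeasure μ] {f : ℝ → ℝ} {C a b : ℝ}
    (hf : Measurable f) (hC : ∀ r, |f r| ≤ C) : IntervalIntegrable f μ a b :=
  intervalIntegrable_const.mono_fun' hf.aestronglyMeasurable (ae_of_all _ hC)

theorem continuous_intervalIntegral_of_continuousAt_of_ne [IsLocallyFiniteMeasure μ]
    [NullSingletonClass μ] {F : ℝ → ℝ → ℝ} {a b C : ℝ}
    (hF_meas : ∀ x, AEStronglyMeasurable (F x) (μ.restrict (Ι a b)))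
    (hF_bound : ∀ x, ∀ s ∈ Ι a b, |F x s| ≤ C)
    (hF_cont : ∀ x₀ s, s ≠ x₀ → ContinuousAt (F · s) x₀) :
    Continuous fun x => ∫ s in a..b, F x s ∂μ :=
  continuous_iff_continuousAt.mpr fun x₀ =>
    continuousAt_of_dominated_interval (Eventually.of_forall hF_meas)
      (Eventually.of_forall fun x => ae_of_all _ (hF_bound x)) intervalIntegrable_const
      ((μ.ae_ne x₀).mono fun s hs _ => hF_cont x₀ s hs)

theorem continuous_intervalIntegral_lower [NullSingletonClass μ] {f : ℝ → ℝ}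
    (hf : ∀ a b, IntervalIntegrable f μ a b) (b : ℝ) : Continuous fun a => ∫ r in a..b, f r ∂μ :=
  (continuous_primitive hf b).neg.congr fun a => (integral_symm b a).symm

end ParametricIntegral

theorem continuous_intervalIntegral_comp_splice {E : Type*} [MeasurableSpace E]
    {f₁ f₂ : ℝ → E} (hf₁ : Measurable f₁) (hf₂ : Measurable f₂) {h : E → ℝ}
    (hh : Measurable h) {C : ℝ} (hC : ∀ e, |h e| ≤ C) (a b : ℝ) :
    Continuous fun x => ∫ r in a..b, h (splice f₁ f₂ x r) :=
  continuous_intervalIntegral_of_continuousAt_of_ne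
    (fun x => (hh.comp (measurable_splice hf₁ hf₂ x)).aestronglyMeasurable)
    (fun _ _ _ => hC _)
    (fun x₀ _ hs => continuousAt_const.congr <|
      (eventually_splice_eq (x₀ := x₀) hs).mono fun _ hx => congrArg h hx.symm)

section Phi

variable {E : Type*} {lam kap mu : E → ℝ}

theorem phi_congr_of_eqOn_Ioo {t : ℝ} (ht : 0 ≤ t) {f g : ℝ → E} (hfg : EqOn f g (Ioo 0 t)) :
    phi lam kap mu t f = phi lam kap mu t g := by
  have hae : ∀ a ∈ Icc 0 t, ∀ᵐ s, s ∈ Ι a t → f s = g s := fun a ha =>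
    (volume.ae_ne t).mono fun s hne hs => by
      rw [uIoc_of_le ha.2] at hs
      exact hfg ⟨ha.1.trans_lt hs.1, hs.2.lt_of_ne hne⟩
  refine integral_congr_ae ((hae 0 ⟨le_rfl, ht⟩).mono fun s hs hs_mem => ?_)
  have hs_Icc : s ∈ Icc 0 t := by
    rw [uIoc_of_le ht] at hs_mem
    exact Ioc_subset_Icc_self hs_mem
  rw [hs hs_mem, integral_congr_ae ((hae s hs_Icc).mono fun r hr hr_mem => by rw [hr hr_mem])]

variable [MeasurableSpace E] {f₁ f₂ : ℝ → E}

theorem continuous_phi_splice (hlam : Measurable lam) (hkap : Measurable kap)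
    (hmu : Measurable mu) (hlam0 : ∀ e, 0 ≤ lam e) (hkap0 : ∀ e, 0 ≤ kap e)
    (hmu0 : ∀ e, 0 ≤ mu e) {Cl Cm : ℝ} (hCl : ∀ e, lam e ≤ Cl) (hCm : ∀ e, mu e ≤ Cm)
    {t : ℝ} (ht : 0 ≤ t) (hf₁ : Measurable f₁) (hf₂ : Measurable f₂) :
    Continuous fun x => phi lam kap mu t (splice f₁ f₂ x) := by
  have hmu_abs : ∀ e, |mu e| ≤ Cm := fun e => (abs_of_nonneg (hmu0 e)).trans_le (hCm e)
  have hJ_x : ∀ s, Continuous fun x => ∫ r in s..t, mu (splice f₁ f₂ x r) := fun s =>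
    continuous_intervalIntegral_comp_splice hf₁ hf₂ hmu hmu_abs s t
  have hJ_s : ∀ x, Continuous fun s => ∫ r in s..t, mu (splice f₁ f₂ x r) := fun x =>
    continuous_intervalIntegral_lower (fun _ _ => intervalIntegrable_of_abs_le
      (hmu.comp (measurable_splice hf₁ hf₂ x)) fun _ => hmu_abs _) t
  refine continuous_intervalIntegral_of_continuousAt_of_ne (C := Cl) (fun x => ?_)
    (fun x s hs => ?_) (fun x₀ s hs => ?_)
  · have hg := measurable_splice hf₁ hf₂ x
    exact ((hlam.comp hg).mul (Real.measurable_exp.comp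
      ((hkap.comp hg).neg.mul (hJ_s x).measurable))).aestronglyMeasurable
  · rw [uIoc_of_le ht] at hs
    have hJ_nonneg : 0 ≤ ∫ r in s..t, mu (splice f₁ f₂ x r) :=
      integral_nonneg hs.2 fun _ _ => hmu0 _
    have hexp_le :
        Real.exp (-kap (splice f₁ f₂ x s) * ∫ r in s..t, mu (splice f₁ f₂ x r)) ≤ 1 :=
      Real.exp_le_one_iff.2 (mul_nonpos_of_nonpos_of_nonneg (neg_nonpos.2 (hkap0 _)) hJ_nonneg)
    rw [abs_of_nonneg (mul_nonneg (hlam0 _) (Real.exp_nonneg _))]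
    exact (mul_le_of_le_one_right (hlam0 _) hexp_le).trans (hCl _)
  · have hcont : Continuous fun x => lam (splice f₁ f₂ x₀ s) *
        Real.exp (-kap (splice f₁ f₂ x₀ s) * ∫ r in s..t, mu (splice f₁ f₂ x r)) := by
      have := hJ_x s
      fun_prop
    refine hcont.continuousAt.congr ?_
    filter_upwards [eventually_splice_eq (f₁ := f₁) (f₂ := f₂) hs] with x hx
    rw [hx]

end Phi

theorem stmt9_general {E : Type*} [MetricSpace E] [MeasurableSpace E] [BorelSpace E]
    (lam kap mu : E → ℝ)
    (hlamc : Continuous lam) (hkapc : Continuous kap) (hmuc : Continuous mu)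
    (hlam0 : ∀ x, 0 ≤ lam x) (hkap0 : ∀ x, 0 ≤ kap x) (hmu0 : ∀ x, 0 ≤ mu x)
    (hlamb : ∃ C : ℝ, ∀ x, lam x ≤ C)
    (hmub : ∃ C : ℝ, ∀ x, mu x ≤ C)
    (t : ℝ) (ht : 0 < t)
    (f₁ f₂ : ℝ → E) (hf₁ : Measurable f₁) (hf₂ : Measurable f₂)
    (c : ℝ)
    (hc₁ : min (phi lam kap mu t f₁) (phi lam kap mu t f₂) ≤ c)
    (hc₂ : c ≤ max (phi lam kap mu t f₁) (phi lam kap mu t f₂)) :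
    ∃ x ∈ Set.Icc (0 : ℝ) t,
      phi lam kap mu t (fun s => if s < x then f₁ s else f₂ s) = c := by
  obtain ⟨Cl, hCl⟩ := hlamb
  obtain ⟨Cm, hCm⟩ := hmub
  have hΦ := continuous_phi_splice hlamc.measurable hkapc.measurable hmuc.measurable
    hlam0 hkap0 hmu0 hCl hCm ht.le hf₁ hf₂
  have hΦ_zero : phi lam kap mu t (splice f₁ f₂ 0) = phi lam kap mu t f₂ :=
    phi_congr_of_eqOn_Ioo ht.le fun _ hs => splice_of_le hs.1.le
  have hΦ_t : phi lam kap mu t (splice f₁ f₂ t) = phi lam kap mu t f₁ :=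
    phi_congr_of_eqOn_Ioo ht.le fun _ hs => splice_of_lt hs.2
  have hc : c ∈ uIcc (phi lam kap mu t (splice f₁ f₂ 0))
      (phi lam kap mu t (splice f₁ f₂ t)) := by
    rw [hΦ_zero, hΦ_t, uIcc_comm]
    exact ⟨hc₁, hc₂⟩
  obtain ⟨x, hx, hxc⟩ := intermediate_value_uIcc hΦ.continuousOn hc
  exact ⟨x, uIcc_of_le ht.le ▸ hx, hxc⟩

theorem stmt9 {E : Type*} [MetricSpace E] [MeasurableSpace E] [BorelSpace E]
    (lam kap mu : E → ℝ)
    (hlamc : Continuous lam) (hkapc : Continuous kap) (hmuc : Continuous mu)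
    (hlam0 : ∀ x, 0 ≤ lam x) (hkap0 : ∀ x, 0 ≤ kap x) (hmu0 : ∀ x, 0 ≤ mu x)
    (hlamb : ∃ C : ℝ, ∀ x, lam x ≤ C) (hkapb : ∃ C : ℝ, ∀ x, kap x ≤ C)
    (hmub : ∃ C : ℝ, ∀ x, mu x ≤ C)
    (t : ℝ) (ht : 0 < t)
    (f₁ f₂ : ℝ → E) (hf₁ : Measurable f₁) (hf₂ : Measurable f₂)
    (c : ℝ)
    (hc₁ : min (phi lam kap mu t f₁) (phi lam kap mu t f₂) ≤ c)
    (hc₂ : c ≤ max (phi lam kap mu t f₁) (phi lam kap mu t f₂)) :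
    ∃ x ∈ Set.Icc (0 : ℝ) t,
      phi lam kap mu t (fun s => if s < x then f₁ s else f₂ s) = c :=
  stmt9_general lam kap mu hlamc hkapc hmuc hlam0 hkap0 hmu0 hlamb hmub t ht f₁ f₂ hf₁ hf₂ c hc₁ hc₂
end

section
/- Let E be a metric space, let λ, κ, μ : E → [0,∞) be continuous, let t > 0, and let f, f₁, f₂, … : [0,∞) → E be Borel measurable functions such that f_n → f uniformly on [0,t] and such that there is a compact set K ⊆ E containing f_n(s) and f(s) for all n ∈ ℕ and all s ∈ [0,t]. Then φ_t(f_n) → φ_t(f) as n → ∞. -/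
/-! The integrand of `φ_t` is a continuous function of `λ(f s)`, `κ(f s)` and the inner integral
`∫ₛᵗ μ(f r) dr`. Since `λ, κ, μ` are bounded on the compact set `K`, dominated convergence with
constant dominating functions applies twice: to the inner integral for each fixed `s`, then to the
outer integral. -/

open MeasureTheory Set Filter
open scoped ENNReal Topology

lemma norm_mul_exp_neg_mul_le {a c x A C X : ℝ} (ha : ‖a‖ ≤ A) (hc : ‖c‖ ≤ C) (hx : ‖x‖ ≤ X) :
    ‖a * Real.exp (-c * x)‖ ≤ A * Real.exp (C * X) := by
  have hexp : -c * x ≤ C * X :=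
    calc -c * x ≤ ‖c‖ * ‖x‖ := by rw [← norm_mul]; exact (neg_mul c x ▸ neg_le_abs _)
      _ ≤ C * X := mul_le_mul hc hx (norm_nonneg _) ((norm_nonneg _).trans hc)
  rw [norm_mul, Real.norm_of_nonneg (Real.exp_pos _).le]
  exact mul_le_mul ha (Real.exp_le_exp.2 hexp) (Real.exp_pos _).le ((norm_nonneg _).trans ha)

lemma tendsto_intervalIntegral_of_norm_le_const {ι : Type*} {l : Filter ι}
    [l.IsCountablyGenerated] {u : ι → ℝ → ℝ} {v : ℝ → ℝ} {a b M : ℝ} (hab : a ≤ b)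
    (hmeas : ∀ n, AEStronglyMeasurable (u n) (volume.restrict (Ioc a b)))
    (hle : ∀ n, ∀ r ∈ Ioc a b, ‖u n r‖ ≤ M)
    (hlim : ∀ r ∈ Ioc a b, Tendsto (fun n => u n r) l (𝓝 (v r))) :
    Tendsto (fun n => ∫ r in a..b, u n r) l (𝓝 (∫ r in a..b, v r)) := by
  refine intervalIntegral.tendsto_integral_filter_of_dominated_convergence (fun _ => M)
    (.of_forall fun n => ?_) (.of_forall fun n => .of_forall fun r hr => ?_)
    intervalIntegrable_const (.of_forall fun r hr => ?_) <;> rw [uIoc_of_le hab] at *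
  exacts [hmeas n, hle n r hr, hlim r hr]

lemma norm_intervalIntegral_comp_le {E : Type*} {g : E → ℝ} {h : ℝ → E} {K : Set E} {s t M : ℝ}
    (hs : s ∈ Ioc 0 t) (hgM : ∀ x ∈ K, ‖g x‖ ≤ M) (hhK : ∀ r ∈ Icc 0 t, h r ∈ K) :
    ‖∫ r in s..t, g (h r)‖ ≤ M * t := by
  have hM : 0 ≤ M := (norm_nonneg _).trans (hgM _ (hhK t ⟨hs.1.le.trans hs.2, le_rfl⟩))
  calc ‖∫ r in s..t, g (h r)‖ ≤ M * |t - s| :=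
        intervalIntegral.norm_integral_le_of_norm_le_const fun r hr => by
          rw [uIoc_of_le hs.2] at hr
          exact hgM _ (hhK r ⟨hs.1.le.trans hr.1.le, hr.2⟩)
    _ ≤ M * t := by
        rw [abs_of_nonneg (sub_nonneg.2 hs.2)]
        exact mul_le_mul_of_nonneg_left (by linarith [hs.1]) hM

section

variable {E : Type*} [TopologicalSpace E] [MeasurableSpace E] [OpensMeasurableSpace E]

lemma continuousOn_intervalIntegral_comp_left {g : E → ℝ} {h : ℝ → E} {K : Set E} {a b M : ℝ}
    (hab : a ≤ b) (hg : Continuous g) (hh : Measurable h) (hgM : ∀ x ∈ K, ‖g x‖ ≤ M)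
    (hhK : ∀ r ∈ Icc a b, h r ∈ K) :
    ContinuousOn (fun s => ∫ r in s..b, g (h r)) (Icc a b) := by
  have hint : IntegrableOn (fun r => g (h r)) (uIcc a b) := by
    rw [uIcc_of_le hab]
    refine .of_bound measure_Icc_lt_top (hg.measurable.comp hh).aestronglyMeasurable M ?_
    filter_upwards [ae_restrict_mem measurableSet_Icc] with r hr using hgM _ (hhK r hr)
  simpa only [uIcc_of_le hab] using intervalIntegral.continuousOn_primitive_interval_left hint

theorem tendsto_phi_of_tendsto {ι : Type*} {l : Filter ι} [l.IsCountablyGenerated]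
    {lam kap mu : E → ℝ} (hlam : Continuous lam) (hkap : Continuous kap) (hmu : Continuous mu)
    {t : ℝ} (ht : 0 ≤ t) {K : Set E} (hK : IsCompact K) {f : ℝ → E} {F : ι → ℝ → E}
    (hFm : ∀ n, Measurable (F n)) (hFK : ∀ n, ∀ s ∈ Icc 0 t, F n s ∈ K)
    (hlim : ∀ s ∈ Icc 0 t, Tendsto (fun n => F n s) l (𝓝 (f s))) :
    Tendsto (fun n => phi lam kap mu t (F n)) l (𝓝 (phi lam kap mu t f)) := by
  obtain ⟨Mlam, hMlam⟩ := hK.exists_bound_of_continuousOn hlam.continuousOn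
  obtain ⟨Mkap, hMkap⟩ := hK.exists_bound_of_continuousOn hkap.continuousOn
  obtain ⟨Mmu, hMmu⟩ := hK.exists_bound_of_continuousOn hmu.continuousOn
  have hinner : ∀ s ∈ Icc 0 t, Tendsto (fun n => ∫ r in s..t, mu (F n r)) l
      (𝓝 (∫ r in s..t, mu (f r))) := fun s hs =>
    tendsto_intervalIntegral_of_norm_le_const hs.2
      (fun n => (hmu.measurable.comp (hFm n)).aestronglyMeasurable)
      (fun n r hr => hMmu _ (hFK n r ⟨hs.1.trans hr.1.le, hr.2⟩))
      (fun r hr => (hmu.tendsto _).comp (hlim r ⟨hs.1.trans hr.1.le, hr.2⟩))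
  refine tendsto_intervalIntegral_of_norm_le_const ht (fun n => ?_)
    (fun n s hs => norm_mul_exp_neg_mul_le (hMlam _ (hFK n s (Ioc_subset_Icc_self hs)))
      (hMkap _ (hFK n s (Ioc_subset_Icc_self hs))) (norm_intervalIntegral_comp_le hs hMmu (hFK n)))
    (fun s hs => ?_)
  · have hcont := continuousOn_intervalIntegral_comp_left ht hmu (hFm n) hMmu (hFK n)
    have hinner_meas : AEMeasurable (fun s => ∫ r in s..t, mu (F n r))
        (volume.restrict (Ioc 0 t)) := (hcont.aemeasurable measurableSet_Icc).mono_measure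
      (Measure.restrict_mono Ioc_subset_Icc_self le_rfl)
    exact ((hlam.measurable.comp (hFm n)).aemeasurable.mul (Real.measurable_exp.comp_aemeasurable
      ((hkap.measurable.comp (hFm n)).aemeasurable.neg.mul hinner_meas))).aestronglyMeasurable
  · have hs' := Ioc_subset_Icc_self hs
    exact ((hlam.tendsto _).comp (hlim s hs')).mul ((Real.continuous_exp.tendsto _).comp
      (((hkap.tendsto _).comp (hlim s hs')).neg.mul (hinner s hs')))

end

theorem stmt11_general {E : Type*} [MetricSpace E] [MeasurableSpace E] [BorelSpace E]
    (lam kap mu : E → ℝ)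
    (hlamc : Continuous lam) (hkapc : Continuous kap) (hmuc : Continuous mu)
    (t : ℝ) (ht : 0 < t)
    (f : ℝ → E) (F : ℕ → ℝ → E)
    (hFm : ∀ n, Measurable (F n))
    (hunif : TendstoUniformlyOn F f Filter.atTop (Set.Icc 0 t))
    (K : Set E) (hK : IsCompact K)
    (hFK : ∀ n, ∀ s ∈ Set.Icc (0 : ℝ) t, F n s ∈ K) :
    Filter.Tendsto (fun n => phi lam kap mu t (F n)) Filter.atTop
      (nhds (phi lam kap mu t f)) :=
  tendsto_phi_of_tendsto hlamc hkapc hmuc ht.le hK hFm hFK fun _ hs => hunif.tendsto_at hs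

theorem stmt11 {E : Type*} [MetricSpace E] [MeasurableSpace E] [BorelSpace E]
    (lam kap mu : E → ℝ)
    (hlamc : Continuous lam) (hkapc : Continuous kap) (hmuc : Continuous mu)
    (hlam0 : ∀ x, 0 ≤ lam x) (hkap0 : ∀ x, 0 ≤ kap x) (hmu0 : ∀ x, 0 ≤ mu x)
    (t : ℝ) (ht : 0 < t)
    (f : ℝ → E) (F : ℕ → ℝ → E)
    (hfm : Measurable f) (hFm : ∀ n, Measurable (F n))
    (hunif : TendstoUniformlyOn F f Filter.atTop (Set.Icc 0 t))
    (K : Set E) (hK : IsCompact K)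
    (hfK : ∀ s ∈ Set.Icc (0 : ℝ) t, f s ∈ K)
    (hFK : ∀ n, ∀ s ∈ Set.Icc (0 : ℝ) t, F n s ∈ K) :
    Filter.Tendsto (fun n => phi lam kap mu t (F n)) Filter.atTop
      (nhds (phi lam kap mu t f)) :=
  stmt11_general lam kap mu hlamc hkapc hmuc t ht f F hFm hunif K hK hFK
end

section
/- Let x ∈ ℝ, δ > 0, λ ≥ 0, ε > 0 and n ≥ 1. Set λ⁻ = max{0, λ − ε} and λ⁺ = λ + ε, and for γ ≥ 0 let p_n(γ) = Poisson(n·γ)({k ∈ ℕ : |k/n − x| < δ}). Then inf{ p_n(γ) : γ ∈ (λ−ε, λ+ε) ∩ [0,∞) } = inf{ p_n(γ) : γ ∈ ((λ−ε, λ+ε) ∩ [x−δ, x+δ]) ∪ {λ⁻, λ⁺} }. -/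
open MeasureTheory Set
open scoped ENNReal NNReal

open Real ProbabilityTheory

/-!
For each `k`, the Poisson weight `e^{-θ} θ^k / k!` increases in `θ` on `[0, k]` and decreases on
`[k, ∞)`. Every `k` counted by `p_n(γ)` lies in `(n(x - δ), n(x + δ))`, so `p_n` is nondecreasing on
`(-∞, x - δ]`, nonincreasing on `[x + δ, ∞)`, and continuous (a finite sum). An infimum over an
interval of such a function is therefore attained in `[x - δ, x + δ]` or approached at one of the
two endpoints, and the endpoints belong to the closure of the interval.
-/

lemma hasDerivAt_exp_neg_mul_pow (k : ℕ) (t : ℝ) :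
    HasDerivAt (fun t => exp (-t) * t ^ k) (exp (-t) * (k * t ^ (k - 1) - t ^ k)) t :=
  ((hasDerivAt_neg t).exp.mul (hasDerivAt_pow k t)).congr_deriv (by ring)

lemma monotoneOn_exp_neg_mul_pow (k : ℕ) :
    MonotoneOn (fun t : ℝ => exp (-t) * t ^ k) (Icc 0 k) := by
  refine monotoneOn_of_hasDerivWithinAt_nonneg (convex_Icc _ _) (by fun_prop)
    (fun t _ => (hasDerivAt_exp_neg_mul_pow k t).hasDerivWithinAt) fun t ht => ?_
  rw [interior_Icc] at ht
  have hk : k ≠ 0 := by exact_mod_cast (ht.1.trans ht.2).ne'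
  rw [← mul_pow_sub_one hk, ← sub_mul]
  exact mul_nonneg (exp_pos _).le (mul_nonneg (sub_nonneg.2 ht.2.le) (pow_pos ht.1 _).le)

lemma antitoneOn_exp_neg_mul_pow (k : ℕ) :
    AntitoneOn (fun t : ℝ => exp (-t) * t ^ k) (Ici k) := by
  refine antitoneOn_of_hasDerivWithinAt_nonpos (convex_Ici _) (by fun_prop)
    (fun t _ => (hasDerivAt_exp_neg_mul_pow k t).hasDerivWithinAt) fun t ht => ?_
  rw [interior_Ici] at ht
  have ht0 : 0 < t := (Nat.cast_nonneg k).trans_lt ht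
  rcases eq_or_ne k 0 with rfl | hk
  · simp [(exp_pos _).le]
  rw [← mul_pow_sub_one hk, ← sub_mul]
  exact mul_nonpos_of_nonneg_of_nonpos (exp_pos _).le
    (mul_nonpos_of_nonpos_of_nonneg (sub_nonpos.2 ht.le) (pow_pos ht0 _).le)

lemma measure_le_of_forall_singleton_le {α : Type*} [MeasurableSpace α] [Countable α]
    [MeasurableSingletonClass α] {μ ν : Measure α} {s : Set α} (h : ∀ a ∈ s, μ {a} ≤ ν {a}) :
    μ s ≤ ν s := by
  rw [← μ.tsum_indicator_apply_singleton s .of_discrete,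
    ← ν.tsum_indicator_apply_singleton s .of_discrete]
  exact ENNReal.tsum_le_tsum fun a => indicator_le_indicator' (h a)

lemma monotoneOn_poissonMeasure_singleton (k : ℕ) :
    MonotoneOn (fun r : ℝ≥0 => poissonMeasure r {k}) (Iic k) := by
  intro r hr t ht hrt
  simp only [poissonMeasure_singleton]
  refine ENNReal.ofReal_le_ofReal (div_le_div_of_nonneg_right ?_ (by positivity))
  exact monotoneOn_exp_neg_mul_pow k ⟨r.2, by exact_mod_cast hr⟩ ⟨t.2, by exact_mod_cast ht⟩ hrt

lemma antitoneOn_poissonMeasure_singleton (k : ℕ) :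
    AntitoneOn (fun r : ℝ≥0 => poissonMeasure r {k}) (Ici k) := by
  intro r hr t ht hrt
  simp only [poissonMeasure_singleton]
  refine ENNReal.ofReal_le_ofReal (div_le_div_of_nonneg_right ?_ (by positivity))
  exact antitoneOn_exp_neg_mul_pow k (by exact_mod_cast hr) (by exact_mod_cast ht) hrt

lemma monotoneOn_poissonMeasure_apply {s : Set ℕ} {m : ℝ≥0} (hs : ∀ k ∈ s, m ≤ k) :
    MonotoneOn (fun r : ℝ≥0 => poissonMeasure r s) (Iic m) :=
  fun _ hr _ ht hrt => measure_le_of_forall_singleton_le fun k hk =>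
    monotoneOn_poissonMeasure_singleton k (hr.trans (hs k hk)) (ht.trans (hs k hk)) hrt

lemma antitoneOn_poissonMeasure_apply {s : Set ℕ} {m : ℝ≥0} (hs : ∀ k ∈ s, (k : ℝ≥0) ≤ m) :
    AntitoneOn (fun r : ℝ≥0 => poissonMeasure r s) (Ici m) :=
  fun _ hr _ ht hrt => measure_le_of_forall_singleton_le fun k hk =>
    antitoneOn_poissonMeasure_singleton k ((hs k hk).trans hr) ((hs k hk).trans ht) hrt

lemma continuous_poissonMeasure_apply {s : Set ℕ} (hs : s.Finite) :
    Continuous fun r : ℝ≥0 => poissonMeasure r s := by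
  have hsum : (fun r : ℝ≥0 => poissonMeasure r s) =
      fun r => ∑ k ∈ hs.toFinset, poissonMeasure r {k} := by
    ext r
    conv_lhs => rw [← hs.coe_toFinset]
    exact sum_measure_singleton.symm
  simp only [hsum, poissonMeasure_singleton]
  exact continuous_finsetSum _ fun k _ => ENNReal.continuous_ofReal.comp (by fun_prop)

section InfOfUnimodal

variable {α β : Type*} [CompleteLattice α] {f : β → α}

lemma biInf_le_of_mem_closure [TopologicalSpace α] [ClosedIciTopology α] [TopologicalSpace β]
    {s : Set β} {y : β} (hf : ContinuousWithinAt f s y) (hy : y ∈ closure s) :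
    ⨅ γ ∈ s, f γ ≤ f y :=
  isClosed_Ici.closure_subset (hf.mem_closure hy fun γ hγ => iInf₂_le γ hγ)

lemma biInf_Ioo_inter_Ici_eq [LinearOrder β] {lo hi c : β} (hc : c < hi)
    (hf : ∀ γ ≤ c, f γ = f c) :
    ⨅ γ ∈ Ioo lo hi ∩ Ici c, f γ = ⨅ γ ∈ Ioo lo hi, f γ := by
  refine le_antisymm (le_iInf₂ fun γ hγ => ?_) (biInf_mono inter_subset_left)
  rcases le_or_gt c γ with hcγ | hγc
  · exact iInf₂_le γ ⟨hγ, hcγ⟩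
  · rw [hf γ hγc.le]
    exact iInf₂_le c ⟨⟨hγ.1.trans hγc, hc⟩, le_rfl⟩

lemma biInf_Ioo_eq_of_monotoneOn_of_antitoneOn [TopologicalSpace α] [ClosedIciTopology α]
    [LinearOrder β] [TopologicalSpace β] [OrderTopology β] [DenselyOrdered β] {lo hi a b : β}
    (hlohi : lo < hi) (hf : ContinuousOn f (Icc lo hi)) (hmono : MonotoneOn f (Iic a))
    (hanti : AntitoneOn f (Ici b)) :
    ⨅ γ ∈ Ioo lo hi, f γ = ⨅ γ ∈ (Ioo lo hi ∩ Icc a b) ∪ {lo, hi}, f γ := by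
  have hendpoint : ∀ y ∈ Icc lo hi, ⨅ γ ∈ Ioo lo hi, f γ ≤ f y := fun y hy =>
    biInf_le_of_mem_closure ((hf y hy).mono Ioo_subset_Icc_self) (closure_Ioo hlohi.ne ▸ hy)
  refine le_antisymm ?_ (le_iInf₂ fun γ hγ => ?_)
  · simp only [iInf_union, iInf_pair]
    exact le_inf (biInf_mono inter_subset_left)
      (le_inf (hendpoint lo (left_mem_Icc.2 hlohi.le)) (hendpoint hi (right_mem_Icc.2 hlohi.le)))
  rcases lt_or_ge γ a with hγa | haγ
  · exact (iInf₂_le lo (by simp)).trans (hmono (hγ.1.trans hγa).le hγa.le hγ.1.le)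
  rcases le_or_gt γ b with hγb | hbγ
  · exact iInf₂_le γ (Or.inl ⟨hγ, haγ, hγb⟩)
  · exact (iInf₂_le hi (by simp)).trans (hanti hbγ.le (hbγ.trans hγ.2).le hγ.2.le)

end InfOfUnimodal

lemma abs_div_sub_lt_iff {a c x δ : ℝ} (hc : 0 < c) :
    |a / c - x| < δ ↔ c * (x - δ) < a ∧ a < c * (x + δ) := by
  rw [abs_sub_lt_iff, sub_lt_iff_lt_add, sub_lt_comm, div_lt_iff₀ hc, lt_div_iff₀ hc]
  constructor <;> rintro ⟨h₁, h₂⟩ <;> constructor <;> linarith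

theorem stmt13_general (x δ lam ε : ℝ) (hlam : 0 ≤ lam) (hε : 0 < ε)
    (n : ℕ) (hn : 1 ≤ n) :
    (⨅ γ ∈ Set.Ioo (lam - ε) (lam + ε) ∩ Set.Ici (0 : ℝ),
        ProbabilityTheory.poissonMeasure (Real.toNNReal ((n : ℝ) * γ))
          {k : ℕ | |(k : ℝ) / (n : ℝ) - x| < δ}) =
    (⨅ γ ∈ (Set.Ioo (lam - ε) (lam + ε) ∩ Set.Icc (x - δ) (x + δ)) ∪
        {max 0 (lam - ε), lam + ε},
        ProbabilityTheory.poissonMeasure (Real.toNNReal ((n : ℝ) * γ))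
          {k : ℕ | |(k : ℝ) / (n : ℝ) - x| < δ}) := by
  have hn0 : (0 : ℝ) < n := by exact_mod_cast hn
  set S := {k : ℕ | |(k : ℝ) / (n : ℝ) - x| < δ}
  have hS : ∀ k ∈ S, n * (x - δ) < k ∧ (k : ℝ) < n * (x + δ) :=
    fun k hk => (abs_div_sub_lt_iff hn0).1 hk
  set f : ℝ → ℝ≥0∞ := fun γ => poissonMeasure ((n : ℝ) * γ).toNNReal S
  have hscale : Monotone fun γ : ℝ => ((n : ℝ) * γ).toNNReal :=
    fun _ _ h => Real.toNNReal_mono (by gcongr)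
  have hcont : Continuous f :=
    (continuous_poissonMeasure_apply ((finite_Iic ⌊n * (x + δ)⌋₊).subset
      fun k hk => Nat.le_floor (hS k hk).2.le)).comp (by fun_prop)
  have hmono : MonotoneOn f (Iic (x - δ)) :=
    (monotoneOn_poissonMeasure_apply fun k hk =>
      Real.toNNReal_le_iff_le_coe.2 (hS k hk).1.le).comp (hscale.monotoneOn _) fun _ hγ => hscale hγ
  have hanti : AntitoneOn f (Ici (x + δ)) :=
    (antitoneOn_poissonMeasure_apply fun k hk => by
      simpa using Real.toNNReal_le_toNNReal (hS k hk).2.le).comp_MonotoneOn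
      (hscale.monotoneOn _) fun _ hγ => hscale hγ
  -- `toNNReal` clamps negative rates to `0`
  have hf0 : ∀ γ ≤ 0, f γ = f 0 := fun γ hγ => by
    simp [f, Real.toNNReal_of_nonpos (mul_nonpos_of_nonneg_of_nonpos hn0.le hγ)]
  have hf_max : f (max 0 (lam - ε)) = f (lam - ε) := by
    rcases le_total (lam - ε) 0 with h | h <;> simp [h, hf0]
  rw [biInf_Ioo_inter_Ici_eq (by linarith) hf0,
    biInf_Ioo_eq_of_monotoneOn_of_antitoneOn (by linarith) hcont.continuousOn hmono hanti,
    iInf_union, iInf_union, iInf_pair, iInf_pair, ← hf_max]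

theorem stmt13 (x δ lam ε : ℝ) (hδ : 0 < δ) (hlam : 0 ≤ lam) (hε : 0 < ε)
    (n : ℕ) (hn : 1 ≤ n) :
    (⨅ γ ∈ Set.Ioo (lam - ε) (lam + ε) ∩ Set.Ici (0 : ℝ),
        ProbabilityTheory.poissonMeasure (Real.toNNReal ((n : ℝ) * γ))
          {k : ℕ | |(k : ℝ) / (n : ℝ) - x| < δ}) =
    (⨅ γ ∈ (Set.Ioo (lam - ε) (lam + ε) ∩ Set.Icc (x - δ) (x + δ)) ∪
        {max 0 (lam - ε), lam + ε},
        ProbabilityTheory.poissonMeasure (Real.toNNReal ((n : ℝ) * γ))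
          {k : ℕ | |(k : ℝ) / (n : ℝ) - x| < δ}) :=
  stmt13_general x δ lam ε hlam hε n hn
end

section
/- Let R be a nonempty closed subset of [0,∞) and let ψ : ℝ → [0,∞] be lower semicontinuous. Then the function I : ℝ → [0,∞] defined by I(a) = inf_{γ∈R} [ℓ(γ;a) + ψ(γ)] is lower semicontinuous. -/
open MeasureTheory Set
open scoped ENNReal NNReal

open Filter Topology

theorem lowerSemicontinuous_biInf_of_coercive {X Y β : Type*} [TopologicalSpace X]
    [TopologicalSpace Y] [CompleteLinearOrder β] [DenselyOrdered β] {f : X × Y → β} {R : Set Y}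
    (hf : LowerSemicontinuous f) (hR : IsClosed R)
    (hcoer : ∀ x₀ : X, ∀ c < ⊤, ∃ K, IsCompact K ∧ ∀ᶠ x in 𝓝 x₀, ∀ y ∈ R, y ∉ K → c < f (x, y)) :
    LowerSemicontinuous fun x => ⨅ y ∈ R, f (x, y) := by
  intro x₀ c hc
  obtain ⟨c', hcc', hc'⟩ := exists_between hc
  obtain ⟨K, hK, hfar⟩ := hcoer x₀ c' (hc'.trans_le le_top)
  have hnear : ∀ᶠ x in 𝓝 x₀, ∀ y ∈ K ∩ R, c' < f (x, y) :=
    (hK.inter_right hR).eventually_forall_of_forall_eventually fun y hy =>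
      hf (x₀, y) c' (hc'.trans_le (biInf_le _ hy.2))
  filter_upwards [hnear, hfar] with x hnear hfar
  refine hcc'.trans_le (le_iInf₂ fun y hy => le_of_lt ?_)
  by_cases hyK : y ∈ K
  · exact hnear y ⟨hyK, hy⟩
  · exact hfar y hy hyK

noncomputable def poissonLegendre (γ a : ℝ) : ℝ≥0∞ :=
  ⨆ θ : ℝ, ENNReal.ofReal (θ * a - γ * (Real.exp θ - 1))

theorem lowerSemicontinuous_poissonLegendre :
    LowerSemicontinuous fun p : ℝ × ℝ => poissonLegendre p.1 p.2 :=
  lowerSemicontinuous_iSup fun _ =>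
    (ENNReal.continuous_ofReal.comp (by fun_prop)).lowerSemicontinuous

theorem ofReal_le_poissonLegendre (γ a : ℝ) :
    ENNReal.ofReal (γ / 2 - a * Real.log 2) ≤ poissonLegendre γ a :=
  le_iSup_of_le (-Real.log 2) <| le_of_eq <| congrArg _ <| by
    rw [Real.exp_neg, Real.exp_log two_pos]; ring

theorem ofReal_le_ell {γ : ℝ} (a θ : ℝ) (hγ : 0 ≤ γ) :
    ENNReal.ofReal (θ * a - γ * (Real.exp θ - 1)) ≤ ell γ a := by
  unfold ell
  split_ifs with ha ha0 hγ0
  · exact le_top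
  · subst ha0
    exact ENNReal.ofReal_le_ofReal (by nlinarith [mul_nonneg hγ (Real.exp_pos θ).le])
  · exact le_top
  · have ha' : 0 < a := lt_of_le_of_ne (not_lt.mp ha) (Ne.symm ha0)
    have hγ' : 0 < γ := lt_of_le_of_ne hγ (Ne.symm hγ0)
    refine ENNReal.ofReal_le_ofReal ?_
    -- Fenchel–Young: `x + 1 ≤ exp x` at `x = θ - log (a / γ)`
    have h := Real.add_one_le_exp (θ - Real.log (a / γ))
    rw [Real.exp_sub, Real.exp_log (by positivity), le_div_iff₀ (by positivity)] at h
    field_simp at h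
    nlinarith

theorem ell_le_poissonLegendre {γ : ℝ} (a : ℝ) (hγ : 0 ≤ γ) : ell γ a ≤ poissonLegendre γ a := by
  have hlim : Tendsto (fun θ => γ * (Real.exp θ - 1)) atBot (𝓝 (-γ)) := by
    simpa using (Real.tendsto_exp_atBot.sub_const 1).const_mul γ
  unfold ell poissonLegendre
  split_ifs with ha ha0 hγ0
  · refine le_of_tendsto' (x := atBot) (ENNReal.tendsto_ofReal_atTop.comp ?_) (le_iSup _)
    simp_rw [sub_eq_add_neg]
    exact (tendsto_id.atBot_mul_const_of_neg ha).atTop_add hlim.neg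
  · subst ha0
    exact le_of_tendsto' (x := atBot) (ENNReal.tendsto_ofReal (by simpa using hlim.neg)) (le_iSup _)
  · subst hγ0
    refine le_of_tendsto' (x := atTop) (ENNReal.tendsto_ofReal_atTop.comp ?_) (le_iSup _)
    simpa using tendsto_id.atTop_mul_const (lt_of_le_of_ne (not_lt.mp ha) (Ne.symm ha0))
  · have ha' : 0 < a := lt_of_le_of_ne (not_lt.mp ha) (Ne.symm ha0)
    have hγ' : 0 < γ := lt_of_le_of_ne hγ (Ne.symm hγ0)
    refine le_iSup_of_le (Real.log (a / γ)) (le_of_eq (congrArg _ ?_))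
    rw [Real.exp_log (by positivity)]
    field_simp
    ring

theorem ell_eq_poissonLegendre {γ : ℝ} (a : ℝ) (hγ : 0 ≤ γ) : ell γ a = poissonLegendre γ a :=
  (ell_le_poissonLegendre a hγ).antisymm (iSup_le fun θ => ofReal_le_ell a θ hγ)

theorem eventually_lt_poissonLegendre (a₀ : ℝ) {c : ℝ≥0∞} (hc : c ≠ ⊤) :
    ∃ B, ∀ᶠ a in 𝓝 a₀, ∀ γ, B < γ → c < poissonLegendre γ a := by
  set M := |a₀| + 1
  refine ⟨2 * (c.toReal + M * Real.log 2), ?_⟩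
  filter_upwards [Iio_mem_nhds (show a₀ < M by linarith [le_abs_self a₀])] with a ha γ hγ
  refine lt_of_lt_of_le ?_ (ofReal_le_poissonLegendre γ a)
  rw [ENNReal.lt_ofReal_iff_toReal_lt hc]
  nlinarith [mul_pos (sub_pos.mpr (show a < M from ha)) (Real.log_pos one_lt_two)]

theorem stmt17_general (R : Set ℝ) (hRc : IsClosed R) (hR0 : R ⊆ Set.Ici 0)
    (ψ : ℝ → ℝ≥0∞) (hψ : LowerSemicontinuous ψ) :
    LowerSemicontinuous (fun a : ℝ => ⨅ γ ∈ R, (ell γ a + ψ γ)) := by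
  have hf : LowerSemicontinuous fun p : ℝ × ℝ => poissonLegendre p.2 p.1 + ψ p.2 :=
    (lowerSemicontinuous_poissonLegendre.comp continuous_swap).add (hψ.comp continuous_snd)
  have hcoer : ∀ a₀, ∀ c < ⊤, ∃ K, IsCompact K ∧
      ∀ᶠ a in 𝓝 a₀, ∀ γ ∈ R, γ ∉ K → c < poissonLegendre γ a + ψ γ := by
    intro a₀ c hc
    obtain ⟨B, hB⟩ := eventually_lt_poissonLegendre a₀ hc.ne
    refine ⟨Icc 0 B, isCompact_Icc, hB.mono fun a ha γ hγ hγB => (ha γ ?_).trans_le le_self_add⟩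
    exact lt_of_not_ge fun h => hγB ⟨hR0 hγ, h⟩
  have hell : (fun a => ⨅ γ ∈ R, (ell γ a + ψ γ)) =
      fun a => ⨅ γ ∈ R, (poissonLegendre γ a + ψ γ) :=
    funext fun a => iInf_congr fun γ => iInf_congr fun hγ => by
      rw [ell_eq_poissonLegendre a (hR0 hγ)]
  rw [hell]
  exact lowerSemicontinuous_biInf_of_coercive hf hRc hcoer

theorem stmt17 (R : Set ℝ) (hR : R.Nonempty) (hRc : IsClosed R) (hR0 : R ⊆ Set.Ici 0)
    (ψ : ℝ → ℝ≥0∞) (hψ : LowerSemicontinuous ψ) :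
    LowerSemicontinuous (fun a : ℝ => ⨅ γ ∈ R, (ell γ a + ψ γ)) :=
  stmt17_general R hRc hR0 ψ hψ
end
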